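/- Let (V₁, V₂, β) be a step-two datum. Let (B_j)_{j≥1} be a sequence of vertical metrics on V₂ with δ(B_j) → 0 as j → ∞, and let B_∞ be a symmetric bilinear form on V₂ such that B_j(S,T) → B_∞(S,T) for all S, T ∈ V₂. Then B_∞ is positive definite, and for every X ∈ V₁ with ‖X‖ = 1 and every Z ∈ (ker ad_X)ᗮ, B_∞(ad_X Z, ad_X Z) = ‖Z‖². -/

import Mathlib

open scoped RealInnerProductSpace

/-- Hilbert–Schmidt norm of an endomorphism of a finite-dimensional real
inner product space: `‖A‖_HS = (trace (A* ∘ A))^{1/2}`. -/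
noncomputable def hsNorm {V : Type*} [NormedAddCommGroup V] [InnerProductSpace ℝ V]
    [FiniteDimensional ℝ V] (A : V →ₗ[ℝ] V) : ℝ :=
  Real.sqrt (LinearMap.trace ℝ V (LinearMap.adjoint A ∘ₗ A))

section

variable {V₁ V₂ : Type*} [NormedAddCommGroup V₁] [InnerProductSpace ℝ V₁]
  [FiniteDimensional ℝ V₁] [AddCommGroup V₂] [Module ℝ V₂] [FiniteDimensional ℝ V₂]

/-- A step-two datum: nontrivial layers, alternating bracket whose image spans `V₂`. -/
def IsStepTwoDatum (β : V₁ →ₗ[ℝ] V₁ →ₗ[ℝ] V₂) : Prop :=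
  0 < Module.finrank ℝ V₁ ∧ 0 < Module.finrank ℝ V₂ ∧ (∀ X : V₁, β X X = 0) ∧
    Submodule.span ℝ {T : V₂ | ∃ X Y : V₁, β X Y = T} = ⊤

/-- A vertical metric: positive-definite symmetric bilinear form on `V₂`. -/
def IsVerticalMetric (gv : V₂ →ₗ[ℝ] V₂ →ₗ[ℝ] ℝ) : Prop :=
  (∀ S T : V₂, gv S T = gv T S) ∧ ∀ T : V₂, T ≠ 0 → 0 < gv T T

/-- `J` is Kaplan's operator `J_T` for the bracket `β` and vertical metric `gv`. -/
def IsKaplan (β : V₁ →ₗ[ℝ] V₁ →ₗ[ℝ] V₂) (gv : V₂ →ₗ[ℝ] V₂ →ₗ[ℝ] ℝ) (T : V₂)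
    (J : V₁ →ₗ[ℝ] V₁) : Prop :=
  ∀ U W : V₁, ⟪J U, W⟫ = gv (β U W) T

/-- H-type deviation relative to the vertical metric `gv`. -/
noncomputable def deviationOf (β : V₁ →ₗ[ℝ] V₁ →ₗ[ℝ] V₂) (gv : V₂ →ₗ[ℝ] V₂ →ₗ[ℝ] ℝ) : ℝ :=
  (Real.sqrt (Module.finrank ℝ V₁))⁻¹ *
    sSup {x : ℝ | ∃ T : V₂, ∃ J : V₁ →ₗ[ℝ] V₁,
      gv T T = 1 ∧ IsKaplan β gv T J ∧ x = hsNorm (J ∘ₗ J + LinearMap.id)}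

/-- H-type deviation of the step-two datum. -/
noncomputable def deviation (β : V₁ →ₗ[ℝ] V₁ →ₗ[ℝ] V₂) : ℝ :=
  sInf {d : ℝ | ∃ gv : V₂ →ₗ[ℝ] V₂ →ₗ[ℝ] ℝ, IsVerticalMetric gv ∧ d = deviationOf β gv}

end


set_option linter.unusedSectionVars false

section Aux
variable {V₁ V₂ : Type*} [NormedAddCommGroup V₁] [InnerProductSpace ℝ V₁]
  [FiniteDimensional ℝ V₁] [AddCommGroup V₂] [Module ℝ V₂] [FiniteDimensional ℝ V₂]

lemma psd_cs (g : V₂ →ₗ[ℝ] V₂ →ₗ[ℝ] ℝ) (hsym : ∀ S T, g S T = g T S)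
    (hpos : ∀ T, 0 ≤ g T T) (S T : V₂) : (g S T)^2 ≤ g S S * g T T := by
  have key : ∀ x : ℝ, 0 ≤ g T T * (x*x) + (2 * g S T) * x + g S S := by
    intro x
    have h0 := hpos (S + x • T)
    simp only [map_add, map_smul, LinearMap.add_apply, LinearMap.smul_apply, smul_eq_mul] at h0
    rw [hsym T S] at h0
    nlinarith [h0]
  have h := discrim_le_zero key
  rw [discrim] at h; nlinarith

noncomputable def Jmap (β : V₁ →ₗ[ℝ] V₁ →ₗ[ℝ] V₂) (g : V₂ →ₗ[ℝ] V₂ →ₗ[ℝ] ℝ) (T : V₂) :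
    V₁ →ₗ[ℝ] V₁ where
  toFun U := ∑ i, g (β U (stdOrthonormalBasis ℝ V₁ i)) T • stdOrthonormalBasis ℝ V₁ i
  map_add' U U' := by
    simp [map_add, LinearMap.add_apply, add_smul, Finset.sum_add_distrib]
  map_smul' c U := by
    simp [map_smul, LinearMap.smul_apply, smul_smul, Finset.smul_sum]

lemma Jmap_kaplan (β : V₁ →ₗ[ℝ] V₁ →ₗ[ℝ] V₂) (g : V₂ →ₗ[ℝ] V₂ →ₗ[ℝ] ℝ) (T : V₂)
    (U W : V₁) : ⟪Jmap β g T U, W⟫ = g (β U W) T := by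
  set b := stdOrthonormalBasis ℝ V₁ with hb
  have h1 : ⟪Jmap β g T U, W⟫ = ∑ i, g (β U (b i)) T * ⟪b i, W⟫ := by
    simp [Jmap, sum_inner, real_inner_smul_left, hb]
  rw [h1]
  conv_rhs => rw [← b.sum_repr' W]
  rw [map_sum, map_sum, LinearMap.sum_apply]
  refine Finset.sum_congr rfl fun i _ => ?_
  rw [map_smul, map_smul, LinearMap.smul_apply, smul_eq_mul, mul_comm]


lemma kaplan_unique {β : V₁ →ₗ[ℝ] V₁ →ₗ[ℝ] V₂} {g : V₂ →ₗ[ℝ] V₂ →ₗ[ℝ] ℝ} {T : V₂}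
    {J : V₁ →ₗ[ℝ] V₁} (h : IsKaplan β g T J) : J = Jmap β g T :=
  LinearMap.ext fun U => ext_inner_right ℝ fun W => by
    rw [h U W, Jmap_kaplan β g T U W]

lemma Jmap_addT (β : V₁ →ₗ[ℝ] V₁ →ₗ[ℝ] V₂) (g : V₂ →ₗ[ℝ] V₂ →ₗ[ℝ] ℝ) (S T : V₂) :
    Jmap β g (S + T) = Jmap β g S + Jmap β g T := by
  ext U
  simp [Jmap, map_add, add_smul, Finset.sum_add_distrib]

lemma Jmap_smulT (β : V₁ →ₗ[ℝ] V₁ →ₗ[ℝ] V₂) (g : V₂ →ₗ[ℝ] V₂ →ₗ[ℝ] ℝ) (c : ℝ) (T : V₂) :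
    Jmap β g (c • T) = c • Jmap β g T := by
  ext U
  simp [Jmap, map_smul, smul_smul, Finset.smul_sum]

lemma Jmap_zeroT (β : V₁ →ₗ[ℝ] V₁ →ₗ[ℝ] V₂) (g : V₂ →ₗ[ℝ] V₂ →ₗ[ℝ] ℝ) :
    Jmap β g (0 : V₂) = 0 := by
  ext U
  simp [Jmap]

lemma hsNorm_eq (A : V₁ →ₗ[ℝ] V₁) :
    hsNorm A = Real.sqrt (∑ i, ‖A (stdOrthonormalBasis ℝ V₁ i)‖^2) := by
  set b := stdOrthonormalBasis ℝ V₁ with hb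
  have key : LinearMap.trace ℝ V₁ (LinearMap.adjoint A ∘ₗ A) = ∑ i, ‖A (b i)‖^2 := by
    rw [LinearMap.trace_eq_matrix_trace ℝ b.toBasis, Matrix.trace]
    refine Finset.sum_congr rfl fun i _ => ?_
    rw [Matrix.diag_apply, LinearMap.toMatrix_apply, OrthonormalBasis.coe_toBasis,
      OrthonormalBasis.coe_toBasis_repr_apply, OrthonormalBasis.repr_apply_apply,
      LinearMap.comp_apply, LinearMap.adjoint_inner_right, real_inner_self_eq_norm_sq]
  rw [hsNorm, key]

lemma hsNorm_nonneg (A : V₁ →ₗ[ℝ] V₁) : 0 ≤ hsNorm A := Real.sqrt_nonneg _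

lemma abs_inner_le_hsNorm (A : V₁ →ₗ[ℝ] V₁) (U W : V₁) :
    |⟪A U, W⟫| ≤ hsNorm A * ‖U‖ * ‖W‖ := by
  set b := stdOrthonormalBasis ℝ V₁ with hb
  have h1 : ⟪A U, W⟫ = ∑ i, ⟪b i, U⟫ * ⟪A (b i), W⟫ := by
    conv_lhs => rw [← b.sum_repr' U]
    rw [map_sum, sum_inner]
    refine Finset.sum_congr rfl fun i _ => ?_
    rw [map_smul, real_inner_smul_left]
  have h2 : (∑ i, ⟪b i, U⟫ * ⟪A (b i), W⟫)^2 ≤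
      (∑ i, ⟪b i, U⟫^2) * (∑ i, ⟪A (b i), W⟫^2) :=
    Finset.sum_mul_sq_le_sq_mul_sq _ _ _
  have h3 : ∑ i, ⟪b i, U⟫^2 = ‖U‖^2 := by
    have h := b.sum_inner_mul_inner U U
    rw [real_inner_self_eq_norm_sq] at h
    rw [← h]
    refine Finset.sum_congr rfl fun i _ => ?_
    rw [real_inner_comm (b i) U, sq]
  have h4 : (∑ i, ⟪A (b i), W⟫^2) ≤ (∑ i, ‖A (b i)‖^2) * ‖W‖^2 := by
    rw [Finset.sum_mul]
    refine Finset.sum_le_sum fun i _ => ?_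
    have := abs_real_inner_le_norm (A (b i)) W
    nlinarith [abs_nonneg (⟪A (b i), W⟫), norm_nonneg (A (b i)), norm_nonneg W,
      neg_abs_le (⟪A (b i), W⟫), le_abs_self (⟪A (b i), W⟫)]
  have h5 : ⟪A U, W⟫^2 ≤ ‖U‖^2 * ((∑ i, ‖A (b i)‖^2) * ‖W‖^2) := by
    rw [h1]
    calc (∑ i, ⟪b i, U⟫ * ⟪A (b i), W⟫)^2
        ≤ (∑ i, ⟪b i, U⟫^2) * (∑ i, ⟪A (b i), W⟫^2) := h2
      _ ≤ ‖U‖^2 * ((∑ i, ‖A (b i)‖^2) * ‖W‖^2) := by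
          rw [h3]
          have hs : (0:ℝ) ≤ ∑ i, ⟪A (b i), W⟫^2 := Finset.sum_nonneg fun i _ => sq_nonneg _
          exact mul_le_mul_of_nonneg_left h4 (sq_nonneg _) |>.trans_eq rfl
  have habs : |⟪A U, W⟫| ≤ Real.sqrt (‖U‖^2 * ((∑ i, ‖A (b i)‖^2) * ‖W‖^2)) := by
    rw [← Real.sqrt_sq_eq_abs]
    exact Real.sqrt_le_sqrt h5
  calc |⟪A U, W⟫| ≤ Real.sqrt (‖U‖^2 * ((∑ i, ‖A (b i)‖^2) * ‖W‖^2)) := habs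
    _ = ‖U‖ * (Real.sqrt (∑ i, ‖A (b i)‖^2) * ‖W‖) := by
        rw [Real.sqrt_mul (sq_nonneg _), Real.sqrt_mul (Finset.sum_nonneg fun i _ => sq_nonneg _),
          Real.sqrt_sq (norm_nonneg _), Real.sqrt_sq (norm_nonneg _)]
    _ = hsNorm A * ‖U‖ * ‖W‖ := by rw [hsNorm_eq]; ring

lemma parseval (v : V₁) : ‖v‖^2 = ∑ i, ⟪stdOrthonormalBasis ℝ V₁ i, v⟫^2 := by
  set b := stdOrthonormalBasis ℝ V₁ with hb
  have h := b.sum_inner_mul_inner v v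
  rw [real_inner_self_eq_norm_sq] at h
  rw [← h]
  refine Finset.sum_congr rfl fun i _ => ?_
  rw [real_inner_comm (b i) v, sq]

/-- A crude bound constant for the Kaplan operators of `g`-unit vectors. -/
noncomputable def Cg (β : V₁ →ₗ[ℝ] V₁ →ₗ[ℝ] V₂) (g : V₂ →ₗ[ℝ] V₂ →ₗ[ℝ] ℝ) : ℝ :=
  Real.sqrt (∑ i, (∑ k, Real.sqrt (g (β (stdOrthonormalBasis ℝ V₁ k) (stdOrthonormalBasis ℝ V₁ i))
    (β (stdOrthonormalBasis ℝ V₁ k) (stdOrthonormalBasis ℝ V₁ i))))^2)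

lemma Cg_nonneg (β : V₁ →ₗ[ℝ] V₁ →ₗ[ℝ] V₂) (g : V₂ →ₗ[ℝ] V₂ →ₗ[ℝ] ℝ) : 0 ≤ Cg β g :=
  Real.sqrt_nonneg _

lemma Jmap_apply_norm_le (β : V₁ →ₗ[ℝ] V₁ →ₗ[ℝ] V₂) (g : V₂ →ₗ[ℝ] V₂ →ₗ[ℝ] ℝ)
    (hsym : ∀ S T : V₂, g S T = g T S) (hpos : ∀ T : V₂, 0 ≤ g T T)
    (T : V₂) (hT : g T T = 1) (W : V₁) :
    ‖Jmap β g T W‖ ≤ Cg β g * ‖W‖ := by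
  set b := stdOrthonormalBasis ℝ V₁ with hb
  have hcoef : ∀ i, ⟪b i, Jmap β g T W⟫ = g (β W (b i)) T := fun i => by
    rw [real_inner_comm, Jmap_kaplan]
  have hstep : ∀ i, |g (β W (b i)) T| ≤
      ‖W‖ * (∑ k, Real.sqrt (g (β (b k) (b i)) (β (b k) (b i)))) := by
    intro i
    have hexp : g (β W (b i)) T = ∑ k, ⟪b k, W⟫ * g (β (b k) (b i)) T := by
      conv_lhs => rw [← b.sum_repr' W]
      rw [map_sum, LinearMap.sum_apply, map_sum, LinearMap.sum_apply]
      refine Finset.sum_congr rfl fun k _ => ?_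
      rw [map_smul, LinearMap.smul_apply, map_smul, LinearMap.smul_apply, smul_eq_mul]
    rw [hexp]
    calc |∑ k, ⟪b k, W⟫ * g (β (b k) (b i)) T|
        ≤ ∑ k, |⟪b k, W⟫ * g (β (b k) (b i)) T| := Finset.abs_sum_le_sum_abs _ _
      _ ≤ ∑ k, ‖W‖ * Real.sqrt (g (β (b k) (b i)) (β (b k) (b i))) := by
          refine Finset.sum_le_sum fun k _ => ?_
          rw [abs_mul]
          have h1 : |⟪b k, W⟫| ≤ ‖W‖ := by
            have := abs_real_inner_le_norm (b k) W
            simpa [b.orthonormal.1 k] using this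
          have h2 : |g (β (b k) (b i)) T| ≤
              Real.sqrt (g (β (b k) (b i)) (β (b k) (b i))) := by
            rw [← Real.sqrt_sq_eq_abs]
            refine Real.sqrt_le_sqrt ?_
            have := psd_cs g hsym hpos (β (b k) (b i)) T
            rw [hT, mul_one] at this
            exact this
          exact mul_le_mul h1 h2 (abs_nonneg _) (norm_nonneg _)
      _ = ‖W‖ * (∑ k, Real.sqrt (g (β (b k) (b i)) (β (b k) (b i)))) := by
          rw [Finset.mul_sum]
  have hnormsq : ‖Jmap β g T W‖^2 ≤ (∑ i, (∑ k, Real.sqrt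
      (g (β (b k) (b i)) (β (b k) (b i))))^2) * ‖W‖^2 := by
    rw [parseval (Jmap β g T W), Finset.sum_mul]
    refine Finset.sum_le_sum fun i _ => ?_
    rw [hcoef i]
    have h := hstep i
    have hnn : (0:ℝ) ≤ ‖W‖ * (∑ k, Real.sqrt (g (β (b k) (b i)) (β (b k) (b i)))) :=
      (abs_nonneg _).trans h
    calc g (β W (b i)) T ^ 2 = |g (β W (b i)) T|^2 := (sq_abs _).symm
      _ ≤ (‖W‖ * (∑ k, Real.sqrt (g (β (b k) (b i)) (β (b k) (b i)))))^2 := by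
          exact pow_le_pow_left₀ (abs_nonneg _) h 2
      _ = (∑ k, Real.sqrt (g (β (b k) (b i)) (β (b k) (b i))))^2 * ‖W‖^2 := by ring
  have := Real.sqrt_le_sqrt hnormsq
  rw [Real.sqrt_sq (norm_nonneg _)] at this
  calc ‖Jmap β g T W‖ ≤ Real.sqrt ((∑ i, (∑ k, Real.sqrt
        (g (β (b k) (b i)) (β (b k) (b i))))^2) * ‖W‖^2) := this
    _ = Cg β g * ‖W‖ := by
        rw [Real.sqrt_mul (Finset.sum_nonneg fun i _ => sq_nonneg _), Real.sqrt_sq (norm_nonneg _),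
          Cg, hb]

lemma dev_set_bddAbove (β : V₁ →ₗ[ℝ] V₁ →ₗ[ℝ] V₂) (g : V₂ →ₗ[ℝ] V₂ →ₗ[ℝ] ℝ)
    (hsym : ∀ S T : V₂, g S T = g T S) (hpos : ∀ T : V₂, 0 ≤ g T T) :
    BddAbove {x : ℝ | ∃ T : V₂, ∃ J : V₁ →ₗ[ℝ] V₁,
      g T T = 1 ∧ IsKaplan β g T J ∧ x = hsNorm (J ∘ₗ J + LinearMap.id)} := by
  refine ⟨Real.sqrt (∑ _i : Fin (Module.finrank ℝ V₁), (Cg β g * Cg β g + 1)^2), ?_⟩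
  rintro x ⟨T, J, hT, hK, rfl⟩
  rw [kaplan_unique hK, hsNorm_eq]
  refine Real.sqrt_le_sqrt (Finset.sum_le_sum fun i _ => ?_)
  set b := stdOrthonormalBasis ℝ V₁ with hb
  have h1 : ‖(Jmap β g T ∘ₗ Jmap β g T + LinearMap.id : V₁ →ₗ[ℝ] V₁) (b i)‖ ≤ Cg β g * Cg β g + 1 := by
    have hb1 : ‖b i‖ = 1 := b.orthonormal.1 i
    calc ‖(Jmap β g T ∘ₗ Jmap β g T + LinearMap.id : V₁ →ₗ[ℝ] V₁) (b i)‖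
        = ‖Jmap β g T (Jmap β g T (b i)) + b i‖ := by
          simp [LinearMap.add_apply, LinearMap.comp_apply]
      _ ≤ ‖Jmap β g T (Jmap β g T (b i))‖ + ‖b i‖ := norm_add_le _ _
      _ ≤ Cg β g * ‖Jmap β g T (b i)‖ + 1 := by
          rw [hb1]
          exact add_le_add_left (Jmap_apply_norm_le β g hsym hpos T hT _) 1
      _ ≤ Cg β g * (Cg β g * ‖b i‖) + 1 := by
          refine add_le_add_left (mul_le_mul_of_nonneg_left ?_ (Cg_nonneg β g)) 1
          exact Jmap_apply_norm_le β g hsym hpos T hT _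
      _ = Cg β g * Cg β g + 1 := by rw [hb1, mul_one]
  exact pow_le_pow_left₀ (norm_nonneg _) h1 2

lemma unit_T_bound (β : V₁ →ₗ[ℝ] V₁ →ₗ[ℝ] V₂) (g : V₂ →ₗ[ℝ] V₂ →ₗ[ℝ] ℝ)
    (hβ : IsStepTwoDatum β) (hsym : ∀ S T : V₂, g S T = g T S) (hpos : ∀ T : V₂, 0 ≤ g T T)
    (T : V₂) (hT : g T T = 1) :
    hsNorm (Jmap β g T ∘ₗ Jmap β g T + LinearMap.id) ≤
      Real.sqrt (Module.finrank ℝ V₁) * deviationOf β g := by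
  have hmem : hsNorm (Jmap β g T ∘ₗ Jmap β g T + LinearMap.id) ∈
      {x : ℝ | ∃ T : V₂, ∃ J : V₁ →ₗ[ℝ] V₁,
        g T T = 1 ∧ IsKaplan β g T J ∧ x = hsNorm (J ∘ₗ J + LinearMap.id)} :=
    ⟨T, Jmap β g T, hT, fun U W => Jmap_kaplan β g T U W, rfl⟩
  have hle := le_csSup (dev_set_bddAbove β g hsym hpos) hmem
  have hn : (0:ℝ) < Real.sqrt (Module.finrank ℝ V₁) := by
    refine Real.sqrt_pos.2 ?_
    exact_mod_cast hβ.1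
  rw [deviationOf, ← mul_assoc, mul_inv_cancel₀ hn.ne', one_mul]
  exact hle

lemma Jmap_sq_bound (β : V₁ →ₗ[ℝ] V₁ →ₗ[ℝ] V₂) (g : V₂ →ₗ[ℝ] V₂ →ₗ[ℝ] ℝ)
    (hβ : IsStepTwoDatum β) (hg : IsVerticalMetric g) (T : V₂) (U W : V₁) :
    |⟪Jmap β g T (Jmap β g T U), W⟫ + g T T * ⟪U, W⟫| ≤
      (Real.sqrt (Module.finrank ℝ V₁) * deviationOf β g) * g T T * (‖U‖ * ‖W‖) := by
  have hpos : ∀ T : V₂, 0 ≤ g T T := by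
    intro T
    rcases eq_or_ne T 0 with rfl | h
    · simp
    · exact (hg.2 T h).le
  rcases eq_or_ne T 0 with rfl | hT0
  · simp [Jmap_zeroT]
  · have hτ : 0 < g T T := hg.2 T hT0
    set τ := g T T with hτdef
    have hs : (0:ℝ) < Real.sqrt τ := Real.sqrt_pos.2 hτ
    have hinv : (Real.sqrt τ)⁻¹ * (Real.sqrt τ)⁻¹ = τ⁻¹ := by
      rw [← mul_inv, Real.mul_self_sqrt hτ.le]
    set T' := (Real.sqrt τ)⁻¹ • T with hT'
    have hT'unit : g T' T' = 1 := by
      rw [hT']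
      simp only [map_smul, LinearMap.smul_apply, smul_eq_mul]
      rw [← mul_assoc, hinv]
      exact inv_mul_cancel₀ hτ.ne'
    have hdevb := unit_T_bound β g hβ hg.1 hpos T' hT'unit
    have h1 := abs_inner_le_hsNorm (Jmap β g T' ∘ₗ Jmap β g T' + LinearMap.id) U W
    have hJ' : Jmap β g T' = (Real.sqrt τ)⁻¹ • Jmap β g T := Jmap_smulT β g _ T
    have hval : ⟪(Jmap β g T' ∘ₗ Jmap β g T' + LinearMap.id : V₁ →ₗ[ℝ] V₁) U, W⟫ =
        τ⁻¹ * ⟪Jmap β g T (Jmap β g T U), W⟫ + ⟪U, W⟫ := by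
      rw [LinearMap.add_apply, LinearMap.comp_apply, inner_add_left, hJ']
      rw [LinearMap.smul_apply, LinearMap.smul_apply, map_smul, LinearMap.id_apply]
      rw [smul_smul, real_inner_smul_left, hinv]
    have key : |τ⁻¹ * ⟪Jmap β g T (Jmap β g T U), W⟫ + ⟪U, W⟫| ≤
        (Real.sqrt (Module.finrank ℝ V₁) * deviationOf β g) * (‖U‖ * ‖W‖) := by
      rw [← hval]
      calc |⟪(Jmap β g T' ∘ₗ Jmap β g T' + LinearMap.id : V₁ →ₗ[ℝ] V₁) U, W⟫|
          ≤ hsNorm (Jmap β g T' ∘ₗ Jmap β g T' + LinearMap.id) * ‖U‖ * ‖W‖ := h1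
        _ ≤ (Real.sqrt (Module.finrank ℝ V₁) * deviationOf β g) * (‖U‖ * ‖W‖) := by
            rw [mul_assoc]
            refine mul_le_mul_of_nonneg_right hdevb ?_
            positivity
    have heq : ⟪Jmap β g T (Jmap β g T U), W⟫ + τ * ⟪U, W⟫ =
        τ * (τ⁻¹ * ⟪Jmap β g T (Jmap β g T U), W⟫ + ⟪U, W⟫) := by
      field_simp
    rw [heq, abs_mul, abs_of_pos hτ]
    calc τ * |τ⁻¹ * ⟪Jmap β g T (Jmap β g T U), W⟫ + ⟪U, W⟫|
        ≤ τ * ((Real.sqrt (Module.finrank ℝ V₁) * deviationOf β g) * (‖U‖ * ‖W‖)) :=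
          mul_le_mul_of_nonneg_left key hτ.le
      _ = (Real.sqrt (Module.finrank ℝ V₁) * deviationOf β g) * τ * (‖U‖ * ‖W‖) := by ring

lemma beta_antisymm {β : V₁ →ₗ[ℝ] V₁ →ₗ[ℝ] V₂} (halt : ∀ X : V₁, β X X = 0) (U W : V₁) :
    β U W = - β W U := by
  have h := halt (U + W)
  simp only [map_add, LinearMap.add_apply, halt, zero_add, add_zero] at h
  exact eq_neg_of_add_eq_zero_right h

lemma c_nonneg (β : V₁ →ₗ[ℝ] V₁ →ₗ[ℝ] V₂) (g : V₂ →ₗ[ℝ] V₂ →ₗ[ℝ] ℝ)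
    (hβ : IsStepTwoDatum β) (hg : IsVerticalMetric g) :
    0 ≤ Real.sqrt (Module.finrank ℝ V₁) * deviationOf β g := by
  have hpos : ∀ T : V₂, 0 ≤ g T T := by
    intro T
    rcases eq_or_ne T 0 with rfl | h
    · simp
    · exact (hg.2 T h).le
  have : Nontrivial V₂ := Module.finrank_pos_iff.mp hβ.2.1
  obtain ⟨T₀, hT₀⟩ := exists_ne (0 : V₂)
  have hτ : 0 < g T₀ T₀ := hg.2 T₀ hT₀
  have hinv : (Real.sqrt (g T₀ T₀))⁻¹ * (Real.sqrt (g T₀ T₀))⁻¹ = (g T₀ T₀)⁻¹ := by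
    rw [← mul_inv, Real.mul_self_sqrt hτ.le]
  have hT'unit : g ((Real.sqrt (g T₀ T₀))⁻¹ • T₀) ((Real.sqrt (g T₀ T₀))⁻¹ • T₀) = 1 := by
    simp only [map_smul, LinearMap.smul_apply, smul_eq_mul]
    rw [← mul_assoc, hinv]
    exact inv_mul_cancel₀ hτ.ne'
  exact (hsNorm_nonneg _).trans (unit_T_bound β g hβ hg.1 hpos _ hT'unit)

lemma F2_unit (β : V₁ →ₗ[ℝ] V₁ →ₗ[ℝ] V₂) (g : V₂ →ₗ[ℝ] V₂ →ₗ[ℝ] ℝ)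
    (hβ : IsStepTwoDatum β) (hg : IsVerticalMetric g) (X : V₁) (hX : ‖X‖ = 1)
    (S T : V₂) (hS : g S S = 1) (hT : g T T = 1) :
    |⟪Jmap β g S X, Jmap β g T X⟫ - g S T| ≤
      3 * (Real.sqrt (Module.finrank ℝ V₁) * deviationOf β g) := by
  set c := Real.sqrt (Module.finrank ℝ V₁) * deviationOf β g with hc
  have hpos : ∀ T : V₂, 0 ≤ g T T := by
    intro T
    rcases eq_or_ne T 0 with rfl | h
    · simp
    · exact (hg.2 T h).le
  have hXX : ⟪X, X⟫ = (1:ℝ) := by rw [real_inner_self_eq_norm_sq, hX]; norm_num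
  have hbS := Jmap_sq_bound β g hβ hg S X X
  have hbT := Jmap_sq_bound β g hβ hg T X X
  have hbST := Jmap_sq_bound β g hβ hg (S + T) X X
  rw [hS, hXX, hX] at hbS
  rw [hT, hXX, hX] at hbT
  rw [hXX, hX] at hbST
  simp only [mul_one, one_mul] at hbS hbT hbST
  have hc0 : 0 ≤ c := (abs_nonneg _).trans hbS
  -- expand the S+T term
  have hsum : g (S + T) (S + T) = 2 + 2 * g S T := by
    simp only [map_add, LinearMap.add_apply]
    rw [hS, hT, hg.1 T S]; ring
  have hST1 : |g S T| ≤ 1 := by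
    have := psd_cs g hg.1 hpos S T
    rw [hS, hT, mul_one] at this
    rw [← Real.sqrt_sq_eq_abs]
    calc Real.sqrt (g S T ^ 2) ≤ Real.sqrt 1 := Real.sqrt_le_sqrt this
      _ = 1 := Real.sqrt_one
  have hJsum : Jmap β g (S + T) = Jmap β g S + Jmap β g T := Jmap_addT β g S T
  have hskewS : ⟪Jmap β g S (Jmap β g T X), X⟫ = - ⟪Jmap β g S X, Jmap β g T X⟫ := by
    rw [Jmap_kaplan, beta_antisymm hβ.2.2.1, map_neg, LinearMap.neg_apply, ← Jmap_kaplan β g S,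
      real_inner_comm]
  have hskewT2 : True := trivial
  have hskewT : ⟪Jmap β g T (Jmap β g S X), X⟫ = - ⟪Jmap β g S X, Jmap β g T X⟫ := by
    rw [Jmap_kaplan, beta_antisymm hβ.2.2.1, map_neg, LinearMap.neg_apply, ← Jmap_kaplan β g T]
    rw [real_inner_comm]
  have hexp : ⟪Jmap β g (S + T) (Jmap β g (S + T) X), X⟫ =
      ⟪Jmap β g S (Jmap β g S X), X⟫ + ⟪Jmap β g T (Jmap β g T X), X⟫
        - 2 * ⟪Jmap β g S X, Jmap β g T X⟫ := by
    rw [hJsum]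
    simp only [LinearMap.add_apply, map_add, inner_add_left]
    rw [hskewS, hskewT]; ring
  rw [hexp, hsum] at hbST
  have h4 : 2 + 2 * g S T ≤ 4 := by nlinarith [abs_le.mp hST1]
  have h0 : 0 ≤ 2 + 2 * g S T := by nlinarith [abs_le.mp hST1]
  have hbS' := abs_le.mp hbS
  have hbT' := abs_le.mp hbT
  have hbST' := abs_le.mp hbST
  have hcst : c * (2 + 2 * g S T) ≤ 4 * c := by nlinarith
  rw [abs_le]
  constructor <;> nlinarith [hbS'.1, hbS'.2, hbT'.1, hbT'.2, hbST'.1, hbST'.2]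

lemma F2 (β : V₁ →ₗ[ℝ] V₁ →ₗ[ℝ] V₂) (g : V₂ →ₗ[ℝ] V₂ →ₗ[ℝ] ℝ)
    (hβ : IsStepTwoDatum β) (hg : IsVerticalMetric g) (X : V₁) (hX : ‖X‖ = 1)
    (S T : V₂) :
    |⟪Jmap β g S X, Jmap β g T X⟫ - g S T| ≤
      3 * (Real.sqrt (Module.finrank ℝ V₁) * deviationOf β g) *
        (Real.sqrt (g S S) * Real.sqrt (g T T)) := by
  set c := Real.sqrt (Module.finrank ℝ V₁) * deviationOf β g with hc
  have hc0 : 0 ≤ c := c_nonneg β g hβ hg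
  rcases eq_or_ne S 0 with rfl | hS0
  · simp only [Jmap_zeroT, LinearMap.zero_apply, inner_zero_left, map_zero,
      LinearMap.zero_apply, sub_zero, abs_zero]
    positivity
  rcases eq_or_ne T 0 with rfl | hT0
  · simp only [Jmap_zeroT, LinearMap.zero_apply, inner_zero_right, map_zero, sub_zero, abs_zero]
    positivity
  have hσ : 0 < g S S := hg.2 S hS0
  have hτ : 0 < g T T := hg.2 T hT0
  have hsσ : 0 < Real.sqrt (g S S) := Real.sqrt_pos.2 hσ
  have hsτ : 0 < Real.sqrt (g T T) := Real.sqrt_pos.2 hτ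
  have hinvσ : (Real.sqrt (g S S))⁻¹ * (Real.sqrt (g S S))⁻¹ = (g S S)⁻¹ := by
    rw [← mul_inv, Real.mul_self_sqrt hσ.le]
  have hinvτ : (Real.sqrt (g T T))⁻¹ * (Real.sqrt (g T T))⁻¹ = (g T T)⁻¹ := by
    rw [← mul_inv, Real.mul_self_sqrt hτ.le]
  have hSunit : g ((Real.sqrt (g S S))⁻¹ • S) ((Real.sqrt (g S S))⁻¹ • S) = 1 := by
    simp only [map_smul, LinearMap.smul_apply, smul_eq_mul]
    rw [← mul_assoc, hinvσ]
    exact inv_mul_cancel₀ hσ.ne'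
  have hTunit : g ((Real.sqrt (g T T))⁻¹ • T) ((Real.sqrt (g T T))⁻¹ • T) = 1 := by
    simp only [map_smul, LinearMap.smul_apply, smul_eq_mul]
    rw [← mul_assoc, hinvτ]
    exact inv_mul_cancel₀ hτ.ne'
  have key := F2_unit β g hβ hg X hX _ _ hSunit hTunit
  rw [Jmap_smulT, Jmap_smulT] at key
  simp only [LinearMap.smul_apply, real_inner_smul_left, real_inner_smul_right,
    map_smul, smul_eq_mul] at key
  have hfact : (Real.sqrt (g T T))⁻¹ * ((Real.sqrt (g S S))⁻¹ * ⟪Jmap β g S X, Jmap β g T X⟫) -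
      (Real.sqrt (g T T))⁻¹ * ((Real.sqrt (g S S))⁻¹ * g S T) =
      ((Real.sqrt (g S S))⁻¹ * (Real.sqrt (g T T))⁻¹) *
        (⟪Jmap β g S X, Jmap β g T X⟫ - g S T) := by ring
  rw [hfact, abs_mul] at key
  have habs : |(Real.sqrt (g S S))⁻¹ * (Real.sqrt (g T T))⁻¹| =
      (Real.sqrt (g S S))⁻¹ * (Real.sqrt (g T T))⁻¹ := by
    rw [abs_of_pos]; positivity
  rw [habs] at key
  have hprod : 0 < (Real.sqrt (g S S))⁻¹ * (Real.sqrt (g T T))⁻¹ := by positivity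
  rw [← le_div_iff₀' hprod] at key
  calc |⟪Jmap β g S X, Jmap β g T X⟫ - g S T| ≤
      3 * c / ((Real.sqrt (g S S))⁻¹ * (Real.sqrt (g T T))⁻¹) := key
    _ = 3 * c * (Real.sqrt (g S S) * Real.sqrt (g T T)) := by
        field_simp
  
noncomputable def Kop (β : V₁ →ₗ[ℝ] V₁ →ₗ[ℝ] V₂) (g : V₂ →ₗ[ℝ] V₂ →ₗ[ℝ] ℝ) (X : V₁) :
    V₂ →ₗ[ℝ] V₁ where
  toFun T := Jmap β g T X
  map_add' S T := by
    show Jmap β g (S + T) X = Jmap β g S X + Jmap β g T X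
    rw [Jmap_addT]; rfl
  map_smul' c T := by
    show Jmap β g (c • T) X = (RingHom.id ℝ) c • Jmap β g T X
    rw [Jmap_smulT]; rfl

lemma Kop_apply (β : V₁ →ₗ[ℝ] V₁ →ₗ[ℝ] V₂) (g : V₂ →ₗ[ℝ] V₂ →ₗ[ℝ] ℝ) (X : V₁) (T : V₂) :
    Kop β g X T = Jmap β g T X := rfl

lemma Kop_inner (β : V₁ →ₗ[ℝ] V₁ →ₗ[ℝ] V₂) (g : V₂ →ₗ[ℝ] V₂ →ₗ[ℝ] ℝ) (X : V₁) (T : V₂)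
    (W : V₁) : ⟪Kop β g X T, W⟫ = g (β X W) T := by
  rw [Kop_apply]; exact Jmap_kaplan β g T X W


lemma est_arith {c t τ z : ℝ} (hc0 : 0 ≤ c) (hc : 3 * c ≤ 1/2) (ht0 : 0 ≤ t) (hτ0 : 0 ≤ τ)
    (hz0 : 0 ≤ z) (hA : |t - z| ≤ 3 * c * (Real.sqrt t * Real.sqrt τ))
    (hB : |z - τ| ≤ 3 * c * τ) : |t - z| ≤ 9 * c * z := by
  set u := Real.sqrt t with hu
  set v := Real.sqrt τ with hv
  set w := Real.sqrt z with hw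
  have hu0 : 0 ≤ u := Real.sqrt_nonneg _
  have hv0 : 0 ≤ v := Real.sqrt_nonneg _
  have hw0 : 0 ≤ w := Real.sqrt_nonneg _
  have hu2 : u^2 = t := Real.sq_sqrt ht0
  have hv2 : v^2 = τ := Real.sq_sqrt hτ0
  have hw2 : w^2 = z := Real.sq_sqrt hz0
  have hBa := abs_le.mp hB
  have hAa := abs_le.mp hA
  have hτle : τ ≤ 2 * w^2 := by nlinarith [hBa.1, hBa.2]
  have hvle : v ≤ 1.5 * w := by nlinarith [hv2, hτle]
  have hp1 : 0 ≤ c * u * (1.5 * w - v) :=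
    mul_nonneg (mul_nonneg hc0 hu0) (by linarith)
  have hp2 : 0 ≤ (1/2 - 3*c) * (u * w) :=
    mul_nonneg (by linarith) (mul_nonneg hu0 hw0)
  have hule : u ≤ 2 * w := by nlinarith [hAa.2, hu2, hw2, hp1, hp2, mul_nonneg hu0 hw0]
  have huv : u * v ≤ 3 * w^2 := by
    nlinarith [mul_le_mul hule hvle hv0 (by linarith : (0:ℝ) ≤ 2*w)]
  have hfin : 3 * c * (u * v) ≤ 9 * c * z := by
    have := mul_le_mul_of_nonneg_left huv hc0
    nlinarith [hw2]
  rw [abs_le]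
  constructor
  · have h1 := hAa.1
    linarith
  · have h2 := hAa.2
    linarith

lemma main_est (β : V₁ →ₗ[ℝ] V₁ →ₗ[ℝ] V₂) (g : V₂ →ₗ[ℝ] V₂ →ₗ[ℝ] ℝ)
    (hβ : IsStepTwoDatum β) (hg : IsVerticalMetric g) (X : V₁) (hX : ‖X‖ = 1)
    (hc : 3 * (Real.sqrt (Module.finrank ℝ V₁) * deviationOf β g) ≤ 1/2) :
    (∀ T : V₂, ∃ Z ∈ (LinearMap.ker (β X))ᗮ, β X Z = T) ∧
    ∀ Z ∈ (LinearMap.ker (β X))ᗮ,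
      |g (β X Z) (β X Z) - ‖Z‖^2| ≤
        9 * (Real.sqrt (Module.finrank ℝ V₁) * deviationOf β g) * ‖Z‖^2 := by
  set c := Real.sqrt (Module.finrank ℝ V₁) * deviationOf β g with hcdef
  have hc0 : 0 ≤ c := c_nonneg β g hβ hg
  have hpos : ∀ T : V₂, 0 ≤ g T T := by
    intro T
    rcases eq_or_ne T 0 with rfl | h
    · simp
    · exact (hg.2 T h).le
  have hF2 : ∀ S T : V₂, |⟪Kop β g X S, Kop β g X T⟫ - g S T| ≤
      3 * c * (Real.sqrt (g S S) * Real.sqrt (g T T)) := by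
    intro S T
    rw [Kop_apply, Kop_apply]
    exact F2 β g hβ hg X hX S T
  -- injectivity of Kop
  have hKinj : ∀ T : V₂, Kop β g X T = 0 → T = 0 := by
    intro T hT
    by_contra hT0
    have hτ : 0 < g T T := hg.2 T hT0
    have h := hF2 T T
    rw [hT, inner_zero_left, zero_sub, abs_neg, abs_of_pos hτ,
      Real.mul_self_sqrt (hpos T)] at h
    nlinarith
  -- range of Kop
  have hrangele : LinearMap.range (Kop β g X) ≤ (LinearMap.ker (β X))ᗮ := by
    rintro _ ⟨T, rfl⟩
    rw [Submodule.mem_orthogonal]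
    intro W hW
    rw [real_inner_comm, Kop_inner, LinearMap.mem_ker.mp hW, map_zero, LinearMap.zero_apply]
  have hker : LinearMap.ker (Kop β g X) = ⊥ := by
    rw [LinearMap.ker_eq_bot']
    intro T hT
    exact hKinj T hT
  have hrange : LinearMap.range (Kop β g X) = (LinearMap.ker (β X))ᗮ := by
    refine Submodule.eq_of_le_of_finrank_le hrangele ?_
    have h1 : Module.finrank ℝ (LinearMap.range (Kop β g X)) = Module.finrank ℝ V₂ := by
      have := LinearMap.finrank_range_add_finrank_ker (Kop β g X)
      rw [hker, finrank_bot] at this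
      omega
    have h2 : Module.finrank ℝ (LinearMap.ker (β X)) +
        Module.finrank ℝ ((LinearMap.ker (β X))ᗮ) = Module.finrank ℝ V₁ :=
      Submodule.finrank_add_finrank_orthogonal _
    have h3 := LinearMap.finrank_range_add_finrank_ker (β X)
    have h4 : Module.finrank ℝ (LinearMap.range (β X)) ≤ Module.finrank ℝ V₂ :=
      Submodule.finrank_le _
    omega
  -- surjectivity of β X on the orthogonal complement
  have hsurj : ∀ T : V₂, ∃ Z ∈ (LinearMap.ker (β X))ᗮ, β X Z = T := by
    have hAinj : Function.Injective ((β X) ∘ₗ Kop β g X) := by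
      rw [← LinearMap.ker_eq_bot, LinearMap.ker_eq_bot']
      intro T hT
      have hmem : Kop β g X T ∈ LinearMap.ker (β X) := LinearMap.mem_ker.mpr hT
      have hmem' : Kop β g X T ∈ (LinearMap.ker (β X))ᗮ :=
        hrangele ⟨T, rfl⟩
      have : ⟪Kop β g X T, Kop β g X T⟫ = (0:ℝ) :=
        (Submodule.mem_orthogonal _ _).mp hmem' _ hmem
      exact hKinj T (inner_self_eq_zero.mp this)
    have hAsurj : Function.Surjective ((β X) ∘ₗ Kop β g X) :=
      (LinearMap.injective_iff_surjective).mp hAinj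
    intro T
    obtain ⟨T', hT'⟩ := hAsurj T
    exact ⟨Kop β g X T', hrangele ⟨T', rfl⟩, hT'⟩
  refine ⟨hsurj, ?_⟩
  intro Z hZ
  obtain ⟨T, hT⟩ : Z ∈ LinearMap.range (Kop β g X) := by rw [hrange]; exact hZ
  have key1 : g (β X Z) T = ‖Z‖^2 := by
    rw [← Kop_inner β g X T Z, hT, real_inner_self_eq_norm_sq]
  have key2 : ⟪Kop β g X (β X Z), Kop β g X T⟫ = g (β X Z) (β X Z) := by
    rw [hT, Kop_inner β g X (β X Z) Z]
  have ht0 : 0 ≤ g (β X Z) (β X Z) := hpos _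
  have hτ0 : 0 ≤ g T T := hpos _
  have hz0 : (0:ℝ) ≤ ‖Z‖^2 := sq_nonneg _
  have hA := hF2 (β X Z) T
  rw [key2, key1] at hA
  have hB := hF2 T T
  rw [hT, real_inner_self_eq_norm_sq, Real.mul_self_sqrt (hpos T)] at hB
  exact est_arith hc0 hc ht0 hτ0 hz0 hA hB

end Aux

/-- If a sequence of vertical metrics `B_j` has H-type deviations tending to `0` and
converges pointwise to a symmetric bilinear form `B_∞`, then `B_∞` is positive
definite, and for every horizontal unit vector `X` and `Z ∈ (ker ad_X)ᗮ`,
`B_∞(ad_X Z, ad_X Z) = ‖Z‖²`. -/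
theorem limit_of_vertical_metrics_is_h_type_metric {V₁ V₂ : Type*}
    [NormedAddCommGroup V₁] [InnerProductSpace ℝ V₁] [FiniteDimensional ℝ V₁]
    [AddCommGroup V₂] [Module ℝ V₂] [FiniteDimensional ℝ V₂]
    (β : V₁ →ₗ[ℝ] V₁ →ₗ[ℝ] V₂) (hβ : IsStepTwoDatum β)
    (B : ℕ → V₂ →ₗ[ℝ] V₂ →ₗ[ℝ] ℝ) (hB : ∀ j, IsVerticalMetric (B j))
    (hdev : Filter.Tendsto (fun j => deviationOf β (B j)) Filter.atTop (nhds 0))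
    (Binf : V₂ →ₗ[ℝ] V₂ →ₗ[ℝ] ℝ) (hsymm : ∀ S T : V₂, Binf S T = Binf T S)
    (hconv : ∀ S T : V₂,
      Filter.Tendsto (fun j => B j S T) Filter.atTop (nhds (Binf S T))) :
    (∀ T : V₂, T ≠ 0 → 0 < Binf T T) ∧
    ∀ X : V₁, ‖X‖ = 1 → ∀ Z ∈ (LinearMap.ker (β X))ᗮ,
      Binf (β X Z) (β X Z) = ‖Z‖ ^ 2 := by
  have hcconv : Filter.Tendsto
      (fun j => Real.sqrt (Module.finrank ℝ V₁) * deviationOf β (B j))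
      Filter.atTop (nhds 0) := by
    have h := hdev.const_mul (Real.sqrt (Module.finrank ℝ V₁))
    simpa using h
  have hev : ∀ᶠ j in Filter.atTop,
      3 * (Real.sqrt (Module.finrank ℝ V₁) * deviationOf β (B j)) ≤ 1/2 := by
    have h3 : Filter.Tendsto
        (fun j => 3 * (Real.sqrt (Module.finrank ℝ V₁) * deviationOf β (B j)))
        Filter.atTop (nhds 0) := by
      have := hcconv.const_mul (3:ℝ)
      simpa using this
    exact (h3.eventually_lt_const (by norm_num : (0:ℝ) < 1/2)).mono fun j hj => hj.le
  have part2 : ∀ X : V₁, ‖X‖ = 1 → ∀ Z ∈ (LinearMap.ker (β X))ᗮ,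
      Binf (β X Z) (β X Z) = ‖Z‖ ^ 2 := by
    intro X hX Z hZ
    have hbd : ∀ᶠ j in Filter.atTop, dist (B j (β X Z) (β X Z)) (‖Z‖^2) ≤
        9 * (Real.sqrt (Module.finrank ℝ V₁) * deviationOf β (B j)) * ‖Z‖^2 := by
      refine hev.mono fun j hj => ?_
      rw [Real.dist_eq]
      exact (main_est β (B j) hβ (hB j) X hX hj).2 Z hZ
    have hlim2 : Filter.Tendsto
        (fun j => 9 * (Real.sqrt (Module.finrank ℝ V₁) * deviationOf β (B j)) * ‖Z‖^2)
        Filter.atTop (nhds 0) := by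
      have := (hcconv.const_mul (9:ℝ)).mul_const (‖Z‖^2)
      simpa using this
    have htend : Filter.Tendsto (fun j => B j (β X Z) (β X Z)) Filter.atTop
        (nhds (‖Z‖^2)) := by
      rw [tendsto_iff_dist_tendsto_zero]
      exact squeeze_zero' (Filter.Eventually.of_forall fun j => dist_nonneg) hbd hlim2
    exact tendsto_nhds_unique (hconv _ _) htend
  refine ⟨?_, part2⟩
  intro T hT
  obtain ⟨j₀, hj₀⟩ := hev.exists
  have : Nontrivial V₁ := Module.finrank_pos_iff.mp hβ.1
  obtain ⟨v, hv⟩ := exists_ne (0 : V₁)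
  have hX : ‖(‖v‖⁻¹ • v : V₁)‖ = 1 := norm_smul_inv_norm hv
  obtain ⟨Z, hZmem, hZeq⟩ := (main_est β (B j₀) hβ (hB j₀) _ hX hj₀).1 T
  have hZ0 : Z ≠ 0 := by
    rintro rfl
    rw [map_zero] at hZeq
    exact hT hZeq.symm
  have h := part2 _ hX Z hZmem
  rw [hZeq] at h
  rw [h]
  exact pow_pos (norm_pos_iff.mpr hZ0) 2
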